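/- Approximating set attractivity at infinity: Let f : ℝⁿ → ℝⁿ be a continuous vector field homogeneous in the ∞-limit with triple (r_∞, 𝔡_∞, f_∞), and suppose V_∞ : ℝⁿ → ℝ₊ is a C¹, proper, positive definite function, weighted homogeneous with weight r_∞ and degree d_{V_∞}, such that ⟨∇V_∞(x), f_∞(x)⟩ < 0 for all x ≠ 0. Then there exists λ_∞ > 0 such that ⟨∇V_∞(x), f(x)⟩ < 0 for all x with |x|_{r_∞} ≥ λ_∞. -/

import Mathlib

/-!
Rescale a point `y` far from the origin to the unit sphere `S = {|x|_r = 1}` via `y = λ^r ⋄ x`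
with `λ = |y|_r`. Weighted homogeneity of `V` turns `⟨∇V(y), f(y)⟩` into a positive multiple of
`⟨∇V(x), λ^{-r} ⋄ f(λ^r ⋄ x) / λ^𝔡⟩`, and the vector in the second slot converges to `f_∞(x)`
uniformly on the compact set `S`, which avoids `0`. Since `⟨∇V(x), f_∞(x)⟩` is bounded away from
zero on `S` and `∇V` is bounded there, the perturbed pairing stays negative for large `λ`.
-/

noncomputable def dil {n : ℕ} (r : Fin n → ℝ) (l : ℝ) (x : Fin n → ℝ) : Fin n → ℝ :=
  fun i => l ^ (r i) * x i

noncomputable def hnorm {n : ℕ} (r : Fin n → ℝ) (x : Fin n → ℝ) : ℝ :=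
  ∑ i, |x i| ^ (1 / r i)

/-- `φ` is homogeneous in the ∞-limit with associated triple `(r, d, φinf)`. -/
def HomogInf {n : ℕ} (r : Fin n → ℝ) (d : ℝ) (φ φinf : (Fin n → ℝ) → ℝ) : Prop :=
  Continuous φ ∧ Continuous φinf ∧ φinf ≠ 0 ∧
    ∀ C : Set (Fin n → ℝ), IsCompact C → (0 : Fin n → ℝ) ∉ C →
      ∀ ε > (0:ℝ), ∃ linf > (0:ℝ), ∀ x ∈ C, ∀ l : ℝ, l ≥ linf →
        |φ (dil r l x) / l ^ d - φinf x| ≤ ε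

open Filter Set

section Dilation

variable {n : ℕ} {r : Fin n → ℝ}

lemma hnorm_zero (hr : ∀ i, 0 < r i) : hnorm r 0 = 0 := by
  simp [hnorm, fun i => Real.zero_rpow (inv_pos.mpr (hr i)).ne']

lemma hnorm_dil (hr : ∀ i, 0 < r i) {l : ℝ} (hl : 0 < l) (x : Fin n → ℝ) :
    hnorm r (dil r l x) = l * hnorm r x := by
  rw [hnorm, hnorm, Finset.mul_sum]
  refine Finset.sum_congr rfl fun i _ => ?_
  have hlr : 0 < l ^ r i := Real.rpow_pos_of_pos hl _
  rw [dil, abs_mul, abs_of_pos hlr, Real.mul_rpow hlr.le (abs_nonneg _), ← Real.rpow_mul hl.le,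
    mul_one_div, div_self (hr i).ne', Real.rpow_one]

lemma dil_dil_inv {l : ℝ} (hl : 0 < l) (y : Fin n → ℝ) : dil r l (dil r l⁻¹ y) = y := by
  funext i
  rw [dil, dil, Real.inv_rpow hl.le, mul_inv_cancel_left₀ (Real.rpow_pos_of_pos hl _).ne']

lemma dil_smul_div_rpow {l : ℝ} (hl : 0 < l) (d : ℝ) (v : Fin n → ℝ) :
    dil r l (l ^ d • fun i => v i / l ^ (d + r i)) = v := by
  funext i
  have hd : l ^ d ≠ 0 := (Real.rpow_pos_of_pos hl _).ne'
  have hr : l ^ r i ≠ 0 := (Real.rpow_pos_of_pos hl _).ne'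
  simp only [dil, Pi.smul_apply, smul_eq_mul, Real.rpow_add hl]
  field_simp

lemma continuous_hnorm (hr : ∀ i, 0 ≤ r i) : Continuous (hnorm r) :=
  continuous_finsetSum _ fun i _ =>
    (continuous_apply i).abs.rpow_const fun _ => Or.inr (one_div_nonneg.mpr (hr i))

lemma isCompact_hnorm_eq_one (hr : ∀ i, 0 < r i) : IsCompact {x | hnorm r x = 1} := by
  refine (isCompact_closedBall (0 : Fin n → ℝ) 1).of_isClosed_subset
    (isClosed_eq (continuous_hnorm fun i => (hr i).le) continuous_const) fun x hx => ?_
  rw [mem_closedBall_zero_iff, pi_norm_le_iff_of_nonneg zero_le_one]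
  intro i
  have hterm : |x i| ^ (1 / r i) ≤ hnorm r x :=
    Finset.single_le_sum (f := fun j => |x j| ^ (1 / r j))
      (fun j _ => Real.rpow_nonneg (abs_nonneg _) _) (Finset.mem_univ i)
  by_contra! hgt
  exact (hterm.trans_eq hx).not_gt (Real.one_lt_rpow hgt (one_div_pos.mpr (hr i)))

noncomputable def dilCLM (r : Fin n → ℝ) (l : ℝ) : (Fin n → ℝ) →L[ℝ] (Fin n → ℝ) :=
  ContinuousLinearMap.pi fun i => l ^ r i • ContinuousLinearMap.proj i

@[simp]
lemma dilCLM_apply (l : ℝ) (x : Fin n → ℝ) : dilCLM r l x = dil r l x := rfl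

end Dilation

lemma fderiv_apply_map_of_comp_eq_smul {E : Type*} [NormedAddCommGroup E] [NormedSpace ℝ E]
    {V : E → ℝ} (hV : Differentiable ℝ V) (A : E →L[ℝ] E) {c : ℝ} (hVA : ∀ x, V (A x) = c * V x)
    (x v : E) : fderiv ℝ V (A x) (A v) = c * fderiv ℝ V x v := by
  have hcomp : HasFDerivAt (fun y => V (A y)) ((fderiv ℝ V (A x)).comp A) x :=
    (hV (A x)).hasFDerivAt.comp x A.hasFDerivAt
  have hsmul : HasFDerivAt (fun y => V (A y)) (c • fderiv ℝ V x) x := by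
    simpa only [hVA] using (hV x).hasFDerivAt.const_mul c
  simpa using congrArg (· v) (hcomp.unique hsmul)

lemma fderiv_dil_apply_eq {n : ℕ} {r : Fin n → ℝ} {dV : ℝ} {V : (Fin n → ℝ) → ℝ}
    (hV : Differentiable ℝ V) (hVhom : ∀ l : ℝ, 0 < l → ∀ x, V (dil r l x) = l ^ dV * V x)
    {l : ℝ} (hl : 0 < l) (d : ℝ) (x v : Fin n → ℝ) :
    fderiv ℝ V (dil r l x) v =
      l ^ dV * (l ^ d * fderiv ℝ V x fun i => v i / l ^ (d + r i)) := by
  conv_lhs => rw [← dil_smul_div_rpow (r := r) hl d v]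
  rw [← dilCLM_apply, ← dilCLM_apply,
    fderiv_apply_map_of_comp_eq_smul hV (dilCLM r l) (hVhom l hl), map_smul, smul_eq_mul]

lemma IsCompact.exists_pos_forall_apply_neg_of_norm_sub_le {X E : Type*} [TopologicalSpace X]
    [NormedAddCommGroup E] [NormedSpace ℝ E] {s : Set X} (hs : IsCompact s)
    {W : X → E →L[ℝ] ℝ} {h : X → E} (hW : ContinuousOn W s) (hh : ContinuousOn h s)
    (hneg : ∀ x ∈ s, W x (h x) < 0) :
    ∃ ε > 0, ∀ x ∈ s, ∀ v, ‖v - h x‖ ≤ ε → W x v < 0 := by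
  obtain ⟨c, hc, hWh⟩ := hs.exists_forall_le' (a := 0) (f := fun x => -W x (h x))
    (hW.clm_apply hh).neg fun x hx => neg_pos.mpr (hneg x hx)
  obtain ⟨M, hM⟩ := hs.exists_bound_of_continuousOn hW
  set M' := max M 0 + 1
  have hM' : 0 < M' := by positivity
  refine ⟨c / (2 * M'), by positivity, fun x hx v hv => ?_⟩
  have hpert : W x (v - h x) ≤ c / 2 :=
    calc W x (v - h x) ≤ ‖W x‖ * ‖v - h x‖ := (le_abs_self _).trans ((W x).le_opNorm _)
      _ ≤ M' * (c / (2 * M')) := by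
          gcongr
          exact (hM x hx).trans ((le_max_left _ _).trans (lt_add_one _).le)
      _ = c / 2 := by field_simp
  have := hWh x hx
  rw [map_sub] at hpert
  linarith

lemma HomogInf.eventually_forall_abs_sub_le {n : ℕ} {r : Fin n → ℝ} {d : ℝ}
    {φ φinf : (Fin n → ℝ) → ℝ} (hφ : HomogInf r d φ φinf) {C : Set (Fin n → ℝ)}
    (hC : IsCompact C) (h0 : (0 : Fin n → ℝ) ∉ C) {ε : ℝ} (hε : 0 < ε) :
    ∀ᶠ l in atTop, ∀ x ∈ C, |φ (dil r l x) / l ^ d - φinf x| ≤ ε := by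
  obtain ⟨L, -, hL⟩ := hφ.2.2.2 C hC h0 ε hε
  exact eventually_atTop.mpr ⟨L, fun l hl x hx => hL x hx l hl⟩

theorem attractivity_at_infinity_general {n : ℕ} (rinf : Fin n → ℝ) (hrinf : ∀ i, 0 < rinf i)
    (dinf dV : ℝ)
    (f finf : (Fin n → ℝ) → (Fin n → ℝ))
    (hf : ∀ i : Fin n,
      HomogInf rinf (dinf + rinf i) (fun x => f x i) (fun x => finf x i))
    (V : (Fin n → ℝ) → ℝ)
    (hV : ContDiff ℝ 1 V)
    (hVhom : ∀ l : ℝ, 0 < l → ∀ x, V (dil rinf l x) = l ^ dV * V x)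
    (hLyap : ∀ x : Fin n → ℝ, x ≠ 0 → fderiv ℝ V x (finf x) < 0) :
    ∃ linf > (0:ℝ), ∀ x : Fin n → ℝ, hnorm rinf x ≥ linf → fderiv ℝ V x (f x) < 0 := by
  set S := {x | hnorm rinf x = 1}
  have hS : IsCompact S := isCompact_hnorm_eq_one hrinf
  have hS0 : (0 : Fin n → ℝ) ∉ S := by simp [S, hnorm_zero hrinf]
  obtain ⟨ε, hε, hstable⟩ := hS.exists_pos_forall_apply_neg_of_norm_sub_le
    (hV.continuous_fderiv one_ne_zero).continuousOn
    (continuous_pi fun i => (hf i).2.1).continuousOn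
    fun x hx => hLyap x (ne_of_mem_of_not_mem hx hS0)
  obtain ⟨L, hL⟩ := eventually_atTop.mp <| eventually_all.mpr fun i =>
    (hf i).eventually_forall_abs_sub_le hS hS0 hε
  refine ⟨max L 1, by positivity, fun y hy => ?_⟩
  set l := hnorm rinf y
  have hl : 0 < l := lt_of_lt_of_le one_pos ((le_max_right _ _).trans hy)
  have hyx : dil rinf l (dil rinf l⁻¹ y) = y := dil_dil_inv hl y
  have hxS : dil rinf l⁻¹ y ∈ S := by
    simp only [S, mem_ofPred_eq, hnorm_dil hrinf (inv_pos.mpr hl), l, inv_mul_cancel₀ hl.ne']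
  rw [← hyx, fderiv_dil_apply_eq (hV.differentiable one_ne_zero) hVhom hl dinf]
  refine mul_neg_of_pos_of_neg (by positivity) (mul_neg_of_pos_of_neg (by positivity) ?_)
  refine hstable _ hxS _ ((pi_norm_le_iff_of_nonneg hε.le).mpr fun i => ?_)
  simpa [Real.norm_eq_abs] using hL l ((le_max_left _ _).trans hy) i _ hxS

/-- If the homogeneous approximation at infinity admits a strict homogeneous Lyapunov
function, then far enough from the origin its derivative along `f` is also negative. -/
theorem attractivity_at_infinity {n : ℕ} (rinf : Fin n → ℝ) (hrinf : ∀ i, 0 < rinf i)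
    (dinf dV : ℝ)
    (f finf : (Fin n → ℝ) → (Fin n → ℝ))
    (hf : ∀ i : Fin n,
      HomogInf rinf (dinf + rinf i) (fun x => f x i) (fun x => finf x i))
    (V : (Fin n → ℝ) → ℝ)
    (hV : ContDiff ℝ 1 V)
    (hproper : Filter.Tendsto V (Filter.cocompact (Fin n → ℝ)) Filter.atTop)
    (hVpd : V 0 = 0 ∧ ∀ x ≠ 0, 0 < V x)
    (hVhom : ∀ l : ℝ, 0 < l → ∀ x, V (dil rinf l x) = l ^ dV * V x)
    (hLyap : ∀ x : Fin n → ℝ, x ≠ 0 → fderiv ℝ V x (finf x) < 0) :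
    ∃ linf > (0:ℝ), ∀ x : Fin n → ℝ, hnorm rinf x ≥ linf → fderiv ℝ V x (f x) < 0 :=
  attractivity_at_infinity_general rinf hrinf dinf dV f finf hf V hV hVhom hLyap
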